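/- For the POVM G_i^{(U)} = λ U|i⟩⟨i|U† + ((1−λ)/d) I and the projective POVM E_i^{(U)} = U|i⟩⟨i|U†, the averaged distance satisfies ∫ dU D(E^{(U)}, G^{(U)}) = ((d−1)/(d(d+1)))(1−λ)², where D is the squared-overlap distance D(P,Q) = ∫ dψ Σ_i |⟨ψ|P_i − Q_i|ψ⟩|² and dU is the Haar measure on SU(d). -/

import Mathlib

open MeasureTheory Matrix
open scoped ComplexOrder

noncomputable section

/-- A POVM with `m` outcomes on `ℂ^d`: positive semidefinite operators summing to the identity. -/
def IsPOVM {d m : ℕ} (P : Fin m → Matrix (Fin d) (Fin d) ℂ) : Prop :=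
  (∀ i, (P i).PosSemidef) ∧ ∑ i, P i = 1

/-- The expectation value `⟨ψ|A|ψ⟩`. -/
def expVal {d : ℕ} (A : Matrix (Fin d) (Fin d) ℂ) (ψ : Fin d → ℂ) : ℂ :=
  star ψ ⬝ᵥ A.mulVec ψ

/-- `D(P,Q) = ∫ dψ ∑ᵢ |⟨ψ|Pᵢ - Qᵢ|ψ⟩|²`. -/
def povmDist {d m : ℕ} (μ : Measure (Fin d → ℂ))
    (P Q : Fin m → Matrix (Fin d) (Fin d) ℂ) : ℝ :=
  ∫ ψ, ∑ i, ‖expVal (P i - Q i) ψ‖ ^ 2 ∂μ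

/-- The normalized unitarily invariant measure on unit vectors of `ℂ^d`:
a probability measure concentrated on the unit sphere, invariant under every unitary. -/
def UnitInvariantMeasure {d : ℕ} (μ : Measure (Fin d → ℂ)) : Prop :=
  IsProbabilityMeasure μ ∧
  (∀ᵐ ψ ∂μ, ∑ i, ‖ψ i‖ ^ 2 = 1) ∧
  ∀ U ∈ Matrix.unitaryGroup (Fin d) ℂ, Measure.map (fun ψ => U.mulVec ψ) μ = μ
instance matrixMeasurableSpace {d : ℕ} : MeasurableSpace (Matrix (Fin d) (Fin d) ℂ) :=
  inferInstanceAs (MeasurableSpace (Fin d → Fin d → ℂ))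

/-- `μ` is the normalized Haar measure on `SU(d)`, viewed as a measure on matrices:
a probability measure concentrated on `SU(d)` and left-invariant under `SU(d)`. -/
def IsHaarSU {d : ℕ} (μ : Measure (Matrix (Fin d) (Fin d) ℂ)) : Prop :=
  IsProbabilityMeasure μ ∧
  (∀ᵐ U ∂μ, U ∈ Matrix.specialUnitaryGroup (Fin d) ℂ) ∧
  ∀ V ∈ Matrix.specialUnitaryGroup (Fin d) ℂ,
    Measure.map (fun U => V * U) μ = μ

/-- The von Neumann POVM `E^{(U)}` with elements `U|i⟩⟨i|U†`. -/
def rotatedPOVM {d : ℕ} (U : Matrix (Fin d) (Fin d) ℂ) :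
    Fin d → Matrix (Fin d) (Fin d) ℂ :=
  fun i => U * Matrix.single i i 1 * Uᴴ

/-- The noisy POVM `G^{(U)}_i = λ U|i⟩⟨i|U† + ((1-λ)/d) I`. -/
def noisyPOVM {d : ℕ} (lam : ℝ) (U : Matrix (Fin d) (Fin d) ℂ) :
    Fin d → Matrix (Fin d) (Fin d) ℂ :=
  fun i => (lam : ℂ) • rotatedPOVM U i + (((1 - lam) / d : ℝ) : ℂ) • 1

/-!
For unitary `U` the integrand in `ψ` is `(1 - λ)² ∑ᵢ (|(U†ψ)ᵢ|² - 1/d)²` on the unit sphere, and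
unitary invariance of `dψ` removes `U†`, so the average over `U` is trivial and everything reduces
to the moments `∫ |ψᵢ|⁴` and `∫ |ψᵢ|² |ψⱼ|²`. Invariance under a reflection mixing the coordinates
`i` and `j`, averaged over the phases `±1, ±i` of the mixing, gives
`∫ |ψᵢ|⁴ = ∫ |ψⱼ|⁴ = 2 ∫ |ψᵢ|² |ψⱼ|²`, and `(∑ᵢ |ψᵢ|²)² = 1` then pins `∫ |ψᵢ|⁴ = 2/(d(d+1))`.
-/

open Complex (I)

lemma one_sub_two_smul_vecMulVec_mem_unitaryGroup {n R : Type*} [Fintype n] [DecidableEq n]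
    [CommRing R] [StarRing R] {x : n → R} (hx : star x ⬝ᵥ x = 1) :
    1 - (2 : R) • vecMulVec x (star x) ∈ unitaryGroup n R := by
  have hproj : vecMulVec x (star x) * vecMulVec x (star x) = vecMulVec x (star x) := by
    rw [vecMulVec_mul_vecMulVec, hx, one_smul]
  have hself : star (1 - (2 : R) • vecMulVec x (star x)) =
      1 - (2 : R) • vecMulVec x (star x) := by
    simp [star_eq_conjTranspose, conjTranspose_vecMulVec]
  rw [mem_unitaryGroup_iff, hself, sub_mul, mul_sub, mul_sub, smul_mul_smul_comm, hproj]
  simp only [mul_one, one_mul]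
  module

lemma norm_add_mul_pow_four_phase_sum (a b : ℂ) :
    ‖a + 1 * b‖ ^ 4 + ‖a + -1 * b‖ ^ 4 + ‖a + I * b‖ ^ 4 + ‖a + -I * b‖ ^ 4 =
      4 * ‖a‖ ^ 4 + 4 * ‖b‖ ^ 4 + 16 * (‖a‖ ^ 2 * ‖b‖ ^ 2) := by
  simp only [show ∀ z : ℂ, ‖z‖ ^ 4 = (‖z‖ ^ 2) ^ 2 from fun z => by ring, Complex.sq_norm,
    Complex.normSq_apply, Complex.add_re, Complex.add_im, Complex.mul_re, Complex.mul_im,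
    Complex.neg_re, Complex.neg_im, Complex.I_re, Complex.I_im, Complex.one_re, Complex.one_im]
  ring

variable {d : ℕ}

lemma isCompact_setOf_sum_norm_sq_eq_one : IsCompact {ψ : Fin d → ℂ | ∑ i, ‖ψ i‖ ^ 2 = 1} := by
  refine Metric.isCompact_of_isClosed_isBounded (isClosed_eq (by fun_prop) continuous_const)
    ((Metric.isBounded_closedBall (x := 0) (r := 1)).subset fun ψ hψ => ?_)
  rw [mem_closedBall_zero_iff, pi_norm_le_iff_of_nonneg zero_le_one]
  intro i
  have : ‖ψ i‖ ^ 2 ≤ 1 := hψ ▸ Finset.single_le_sum (f := fun j => ‖ψ j‖ ^ 2)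
    (fun j _ => by positivity) (Finset.mem_univ i)
  nlinarith [norm_nonneg (ψ i)]

lemma Continuous.integrable_of_ae_sum_norm_sq_eq_one {E : Type*} [NormedAddCommGroup E]
    {μ : Measure (Fin d → ℂ)} [IsFiniteMeasure μ] {f : (Fin d → ℂ) → E} (hf : Continuous f)
    (hsph : ∀ᵐ ψ ∂μ, ∑ i, ‖ψ i‖ ^ 2 = 1) : Integrable f μ := by
  rw [← Measure.restrict_eq_self_of_ae_mem hsph]
  exact hf.continuousOn.integrableOn_compact isCompact_setOf_sum_norm_sq_eq_one

section Moments

variable {μ : Measure (Fin d → ℂ)}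

lemma integral_comp_mulVec_of_mem_unitaryGroup {E : Type*} [NormedAddCommGroup E]
    [NormedSpace ℝ E] (hμ : UnitInvariantMeasure μ) {U : Matrix (Fin d) (Fin d) ℂ}
    (hU : U ∈ unitaryGroup (Fin d) ℂ) (f : (Fin d → ℂ) → E) :
    ∫ ψ, f (U *ᵥ ψ) ∂μ = ∫ ψ, f ψ ∂μ := by
  let e := (UnitaryGroup.toLinearEquiv ⟨U, hU⟩).toContinuousLinearEquiv.toHomeomorph
  exact MeasurePreserving.integral_comp ⟨e.continuous.measurable, hμ.2.2 U hU⟩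
    e.measurableEmbedding f

lemma integral_norm_seven_mul_add_pow_four (hμ : UnitInvariantMeasure μ) {i j : Fin d}
    (hij : i ≠ j) {ω : ℂ} (hω : ‖ω‖ = 1) :
    ∫ ψ, ‖7 * ψ i + ω * (24 * ψ j)‖ ^ 4 ∂μ = 25 ^ 4 * ∫ ψ, ‖ψ i‖ ^ 4 ∂μ := by
  -- The reflection `R = 1 - 2xx*` in the unit vector `x = (3/5)eᵢ - (4/5)ω̄eⱼ` has
  -- `(Rψ)ᵢ = (7ψᵢ + 24ωψⱼ)/25`; the Pythagorean triple keeps the coefficients rational.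
  set x : Fin d → ℂ := Pi.single i (3 / 5) + Pi.single j (-(4 / 5) * star ω)
  have hωω : ω * starRingEnd ℂ ω = 1 := by
    rw [Complex.mul_conj, ← Complex.sq_norm, hω]; simp
  have hx : star x ⬝ᵥ x = 1 := by
    simp [x, Pi.star_single, dotProduct_add, dotProduct_single, hij, hij.symm]
    linear_combination (16 / 25 : ℂ) * hωω
  have hRi (ψ : Fin d → ℂ) :
      ((1 - (2 : ℂ) • vecMulVec x (star x)) *ᵥ ψ) i = (7 * ψ i + ω * (24 * ψ j)) / 25 := by
    simp [sub_mulVec, smul_mulVec, vecMulVec_mulVec, x, hij, Pi.star_single, single_dotProduct]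
    ring
  have hR := integral_comp_mulVec_of_mem_unitaryGroup hμ
    (one_sub_two_smul_vecMulVec_mem_unitaryGroup hx) (fun ψ => ‖ψ i‖ ^ 4)
  simp only [hRi, norm_div, div_pow, integral_div] at hR
  rw [← hR, Complex.norm_ofNat, mul_div_cancel₀ _ (by norm_num)]

lemma integral_norm_pow_four_relation (hμ : UnitInvariantMeasure μ) {i j : Fin d}
    (hij : i ≠ j) :
    25 ^ 4 * ∫ ψ, ‖ψ i‖ ^ 4 ∂μ = 7 ^ 4 * ∫ ψ, ‖ψ i‖ ^ 4 ∂μ + 24 ^ 4 * ∫ ψ, ‖ψ j‖ ^ 4 ∂μ +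
      4 * 7 ^ 2 * 24 ^ 2 * ∫ ψ, ‖ψ i‖ ^ 2 * ‖ψ j‖ ^ 2 ∂μ := by
  have := hμ.1
  have integrable {f : (Fin d → ℂ) → ℝ} (hf : Continuous f) : Integrable f μ :=
    hf.integrable_of_ae_sum_norm_sq_eq_one hμ.2.1
  have hphases : ∫ ψ, ‖7 * ψ i + 1 * (24 * ψ j)‖ ^ 4 + ‖7 * ψ i + -1 * (24 * ψ j)‖ ^ 4 +
        ‖7 * ψ i + I * (24 * ψ j)‖ ^ 4 + ‖7 * ψ i + -I * (24 * ψ j)‖ ^ 4 ∂μ =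
      ∫ ψ, 4 * 7 ^ 4 * ‖ψ i‖ ^ 4 + 4 * 24 ^ 4 * ‖ψ j‖ ^ 4 +
        16 * 7 ^ 2 * 24 ^ 2 * (‖ψ i‖ ^ 2 * ‖ψ j‖ ^ 2) ∂μ := by
    refine integral_congr_ae (.of_forall fun ψ => ?_)
    simp only [norm_add_mul_pow_four_phase_sum, norm_mul, Complex.norm_ofNat]
    ring
  rw [integral_add (integrable (by fun_prop)) (integrable (by fun_prop)),
    integral_add (integrable (by fun_prop)) (integrable (by fun_prop)),
    integral_add (integrable (by fun_prop)) (integrable (by fun_prop)),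
    integral_add (integrable (by fun_prop)) (integrable (by fun_prop)),
    integral_add (integrable (by fun_prop)) (integrable (by fun_prop)),
    integral_const_mul, integral_const_mul, integral_const_mul,
    integral_norm_seven_mul_add_pow_four hμ hij (by simp),
    integral_norm_seven_mul_add_pow_four hμ hij (by simp),
    integral_norm_seven_mul_add_pow_four hμ hij (by simp),
    integral_norm_seven_mul_add_pow_four hμ hij (by simp)] at hphases
  linarith

lemma integral_norm_pow_four_eq (hμ : UnitInvariantMeasure μ) {i j : Fin d} (hij : i ≠ j) :
    ∫ ψ, ‖ψ i‖ ^ 4 ∂μ = ∫ ψ, ‖ψ j‖ ^ 4 ∂μ := by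
  have hrel_ij := integral_norm_pow_four_relation hμ hij
  have hrel_ji := integral_norm_pow_four_relation hμ hij.symm
  rw [show (fun ψ : Fin d → ℂ => ‖ψ j‖ ^ 2 * ‖ψ i‖ ^ 2) = fun ψ => ‖ψ i‖ ^ 2 * ‖ψ j‖ ^ 2 from
    funext fun ψ => mul_comm _ _] at hrel_ji
  linarith

lemma integral_norm_sq_mul_norm_sq (hμ : UnitInvariantMeasure μ) {i j : Fin d} (hij : i ≠ j) :
    ∫ ψ, ‖ψ i‖ ^ 2 * ‖ψ j‖ ^ 2 ∂μ = (∫ ψ, ‖ψ i‖ ^ 4 ∂μ) / 2 := by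
  have := integral_norm_pow_four_relation hμ hij
  rw [← integral_norm_pow_four_eq hμ hij] at this
  linarith

lemma sum_sum_integral_norm_sq_mul_norm_sq (hμ : UnitInvariantMeasure μ) :
    ∑ k, ∑ l, ∫ ψ, ‖ψ k‖ ^ 2 * ‖ψ l‖ ^ 2 ∂μ = 1 := by
  have := hμ.1
  have integrable {f : (Fin d → ℂ) → ℝ} (hf : Continuous f) : Integrable f μ :=
    hf.integrable_of_ae_sum_norm_sq_eq_one hμ.2.1
  calc ∑ k, ∑ l, ∫ ψ, ‖ψ k‖ ^ 2 * ‖ψ l‖ ^ 2 ∂μ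
      = ∫ ψ, (∑ k, ‖ψ k‖ ^ 2) ^ 2 ∂μ := by
        simp only [sq, Finset.sum_mul_sum]
        rw [integral_finsetSum _ fun k _ => integrable (by fun_prop)]
        exact Finset.sum_congr rfl fun k _ =>
          (integral_finsetSum _ fun l _ => integrable (by fun_prop)).symm
    _ = 1 := by
        rw [integral_congr_ae (g := fun _ => 1) (hμ.2.1.mono fun ψ hψ => by rw [hψ, one_pow])]
        simp

lemma integral_norm_pow_four (hμ : UnitInvariantMeasure μ) (i : Fin d) :
    ∫ ψ, ‖ψ i‖ ^ 4 ∂μ = 2 / (d * (d + 1)) := by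
  set J := ∫ ψ, ‖ψ i‖ ^ 4 ∂μ
  have hJ (k : Fin d) : ∫ ψ, ‖ψ k‖ ^ 4 ∂μ = J := by
    rcases eq_or_ne k i with rfl | hki
    · rfl
    · exact integral_norm_pow_four_eq hμ hki
  have hK (k l : Fin d) :
      ∫ ψ, ‖ψ k‖ ^ 2 * ‖ψ l‖ ^ 2 ∂μ = J / 2 + if k = l then J / 2 else 0 := by
    split_ifs with hkl
    · simp_rw [hkl, ← pow_add, hJ]
      ring
    · rw [integral_norm_sq_mul_norm_sq hμ hkl, hJ]
      ring
  have hsum := sum_sum_integral_norm_sq_mul_norm_sq hμ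
  simp only [hK, Finset.sum_add_distrib, Finset.sum_ite_eq, Finset.mem_univ, if_true,
    Finset.sum_const, Finset.card_univ, Fintype.card_fin, nsmul_eq_mul] at hsum
  have hd : (d : ℝ) ≠ 0 := by have := i.pos; positivity
  field_simp
  linear_combination 2 * hsum

lemma integral_sum_norm_sq_sub_inv_sq (hμ : UnitInvariantMeasure μ) :
    ∫ ψ, ∑ i, (‖ψ i‖ ^ 2 - (d : ℝ)⁻¹) ^ 2 ∂μ = ((d : ℝ) - 1) / (d * (d + 1)) := by
  rcases Nat.eq_zero_or_pos d with rfl | hd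
  · simp
  have := hμ.1
  have hpt : ∀ᵐ ψ ∂μ, ∑ i, (‖ψ i‖ ^ 2 - (d : ℝ)⁻¹) ^ 2 = ∑ i, ‖ψ i‖ ^ 4 - (d : ℝ)⁻¹ := by
    filter_upwards [hμ.2.1] with ψ hψ
    simp only [sub_sq, Finset.sum_add_distrib, Finset.sum_sub_distrib, ← Finset.sum_mul,
      ← Finset.mul_sum, hψ, ← pow_mul, Finset.sum_const, Finset.card_univ, Fintype.card_fin,
      nsmul_eq_mul]
    field_simp
    ring
  rw [integral_congr_ae hpt,
    integral_sub (integrable_finsetSum _ fun i _ =>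
      Continuous.integrable_of_ae_sum_norm_sq_eq_one (by fun_prop) hμ.2.1) (integrable_const _),
    integral_finsetSum _ fun i _ =>
      Continuous.integrable_of_ae_sum_norm_sq_eq_one (by fun_prop) hμ.2.1]
  simp only [integral_norm_pow_four hμ, Finset.sum_const, Finset.card_univ, Fintype.card_fin,
    nsmul_eq_mul, integral_const, probReal_univ, one_smul]
  field_simp
  ring

end Moments

@[simp]
lemma expVal_add (A B : Matrix (Fin d) (Fin d) ℂ) (ψ : Fin d → ℂ) :
    expVal (A + B) ψ = expVal A ψ + expVal B ψ := by
  simp [expVal, add_mulVec, dotProduct_add]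

@[simp]
lemma expVal_sub (A B : Matrix (Fin d) (Fin d) ℂ) (ψ : Fin d → ℂ) :
    expVal (A - B) ψ = expVal A ψ - expVal B ψ := by
  simp [expVal, sub_mulVec, dotProduct_sub]

@[simp]
lemma expVal_smul (c : ℂ) (A : Matrix (Fin d) (Fin d) ℂ) (ψ : Fin d → ℂ) :
    expVal (c • A) ψ = c * expVal A ψ := by
  simp [expVal, smul_mulVec, dotProduct_smul]

lemma expVal_one (ψ : Fin d → ℂ) : expVal 1 ψ = ((∑ i, ‖ψ i‖ ^ 2 : ℝ) : ℂ) := by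
  simp [expVal, dotProduct, Complex.conj_mul']

lemma expVal_single (i : Fin d) (ψ : Fin d → ℂ) :
    expVal (single i i 1) ψ = ((‖ψ i‖ ^ 2 : ℝ) : ℂ) := by
  simp [expVal, dotProduct, single_mulVec, Function.update_apply, Complex.conj_mul']

lemma expVal_mul_mul_conjTranspose (U A : Matrix (Fin d) (Fin d) ℂ) (ψ : Fin d → ℂ) :
    expVal (U * A * Uᴴ) ψ = expVal A (Uᴴ *ᵥ ψ) := by
  rw [expVal, expVal, ← mulVec_mulVec, ← mulVec_mulVec, dotProduct_mulVec, star_mulVec,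
    conjTranspose_conjTranspose]

lemma expVal_rotatedPOVM (U : Matrix (Fin d) (Fin d) ℂ) (i : Fin d) (ψ : Fin d → ℂ) :
    expVal (rotatedPOVM U i) ψ = ((‖(Uᴴ *ᵥ ψ) i‖ ^ 2 : ℝ) : ℂ) := by
  rw [rotatedPOVM, expVal_mul_mul_conjTranspose, expVal_single]

lemma sum_norm_expVal_rotatedPOVM_sub_noisyPOVM_sq (lam : ℝ) (U : Matrix (Fin d) (Fin d) ℂ)
    (ψ : Fin d → ℂ) :
    ∑ i, ‖expVal (rotatedPOVM U i - noisyPOVM lam U i) ψ‖ ^ 2 =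
      (1 - lam) ^ 2 * ∑ i, (‖(Uᴴ *ᵥ ψ) i‖ ^ 2 - (∑ k, ‖ψ k‖ ^ 2) / d) ^ 2 := by
  rw [Finset.mul_sum]
  refine Finset.sum_congr rfl fun i _ => ?_
  simp only [noisyPOVM, expVal_sub, expVal_add, expVal_smul, expVal_rotatedPOVM, expVal_one]
  rw [← Complex.ofReal_mul, ← Complex.ofReal_mul, ← Complex.ofReal_add, ← Complex.ofReal_sub,
    Complex.norm_real, Real.norm_eq_abs, sq_abs]
  ring

lemma povmDist_rotatedPOVM_noisyPOVM {μ : Measure (Fin d → ℂ)} (hμ : UnitInvariantMeasure μ)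
    (lam : ℝ) {U : Matrix (Fin d) (Fin d) ℂ} (hU : U ∈ unitaryGroup (Fin d) ℂ) :
    povmDist μ (rotatedPOVM U) (noisyPOVM lam U) =
      ((d : ℝ) - 1) / (d * (d + 1)) * (1 - lam) ^ 2 := by
  calc povmDist μ (rotatedPOVM U) (noisyPOVM lam U)
      = ∫ ψ, (1 - lam) ^ 2 * ∑ i, (‖(Uᴴ *ᵥ ψ) i‖ ^ 2 - (d : ℝ)⁻¹) ^ 2 ∂μ :=
        integral_congr_ae <| hμ.2.1.mono fun ψ hψ => by
          simp only [sum_norm_expVal_rotatedPOVM_sub_noisyPOVM_sq, hψ, one_div]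
    _ = (1 - lam) ^ 2 * ∫ ψ, ∑ i, (‖ψ i‖ ^ 2 - (d : ℝ)⁻¹) ^ 2 ∂μ := by
        rw [integral_const_mul, integral_comp_mulVec_of_mem_unitaryGroup hμ
          (show Uᴴ ∈ _ from Unitary.star_mem hU) fun φ => ∑ i, (‖φ i‖ ^ 2 - (d : ℝ)⁻¹) ^ 2]
    _ = ((d : ℝ) - 1) / (d * (d + 1)) * (1 - lam) ^ 2 := by
        rw [integral_sum_norm_sq_sub_inv_sq hμ, mul_comm]

/-- `∫ dU D(E^{(U)}, G^{(U)}) = ((d-1)/(d(d+1))) (1-λ)²`. -/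
theorem average_distance_noisy_povm {d : ℕ}
    (μψ : Measure (Fin d → ℂ)) (hψ : UnitInvariantMeasure μψ)
    (μU : Measure (Matrix (Fin d) (Fin d) ℂ)) (hU : IsHaarSU μU)
    (lam : ℝ) :
    ∫ U, povmDist μψ (rotatedPOVM U) (noisyPOVM lam U) ∂μU
      = ((d : ℝ) - 1) / (d * (d + 1)) * (1 - lam) ^ 2 := by
  obtain ⟨hprob, hSU, -⟩ := hU
  rw [integral_congr_ae (hSU.mono fun U hU => povmDist_rotatedPOVM_noisyPOVM hψ lam
    (mem_specialUnitaryGroup_iff.mp hU).1), integral_const, probReal_univ, one_smul]
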